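/- (Proposition 1, ring part.) Let N ≥ 3 be an integer and let G_{N,r} be the spider web graph with r rings. For every integer k with 2 ≤ k ≤ r, the ring Cheeger constant satisfies ψ_{N,r}(k) ≤ √(2·(1 − cos(π(k−1)/(r−1)))); that is, there exists a ring partition S_1, ..., S_k of G_{N,r} into k parts with max_{1 ≤ i ≤ k} Cut(S_i)/Volume(S_i) ≤ √(2λ^P_k), where λ^P_k = 1 − cos(π(k−1)/(r−1)) is the k-th eigenvalue of the normalized Laplacian of the path graph on r vertices. -/

import Mathlib

/-- The spider web graph `G_{N,r}`: the simple graph on vertex set `ZMod N × Fin r` in which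
`(i,j)` and `(i',j')` are adjacent iff (`j = j'` and `i' = i ± 1 mod N`) or (`i = i'` and
`|j - j'| = 1`); realized as the box (Cartesian) product of the cycle graph on `ZMod N`
(the circulant graph with jump `1`) with the path graph on `Fin r`. -/
def spiderWeb (N r : ℕ) : SimpleGraph (ZMod N × Fin r) :=
  SimpleGraph.boxProd (SimpleGraph.circulantGraph {(1 : ZMod N)}) (SimpleGraph.pathGraph r)

/-- `cut G S`: the number of edges of `G` with exactly one endpoint in `S`, counted as the
number of ordered pairs `(u, v)` with `u ∈ S`, `v ∉ S` and `u ~ v` (each such edge is counted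
exactly once this way). -/
noncomputable def cut {V : Type*} (G : SimpleGraph V) (S : Set V) : ℕ :=
  Set.ncard {p : V × V | p.1 ∈ S ∧ p.2 ∉ S ∧ G.Adj p.1 p.2}

/-- `volume G S`: the sum of the degrees of the vertices in `S`, counted as the number of
ordered pairs `(u, v)` with `u ∈ S` and `u ~ v`. -/
noncomputable def volume {V : Type*} (G : SimpleGraph V) (S : Set V) : ℕ :=
  Set.ncard {p : V × V | p.1 ∈ S ∧ G.Adj p.1 p.2}

/-- `I ⊆ ZMod N` is an arc of cardinality `c`: `I = {a, a+1, ..., a+c-1}` (mod `N`). -/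
def IsArc (N : ℕ) (I : Set (ZMod N)) (c : ℕ) : Prop :=
  ∃ a : ZMod N, I = (fun t : ℕ => a + (t : ZMod N)) '' Set.Iio c

/-- A wedge partition of the vertex set of the spider web graph `G_{N,r}` into `k` parts:
the parts are `A 1 × Fin r, ..., A k × Fin r` where the `A i` are pairwise disjoint
nonempty arcs of `ZMod N` whose union is all of `ZMod N`. -/
def IsWedgePartition (N r k : ℕ) (S : Fin k → Set (ZMod N × Fin r)) : Prop :=
  ∃ A : Fin k → Set (ZMod N),
    (∀ i, ∃ c, 1 ≤ c ∧ IsArc N (A i) c) ∧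
    Pairwise (Function.onFun Disjoint A) ∧
    (⋃ i, A i) = Set.univ ∧
    ∀ i, S i = A i ×ˢ (Set.univ : Set (Fin r))

/-- `B ⊆ Fin r` is an interval: a set of consecutive integers `{a, a+1, ..., b}` with
`a ≤ b < r` (in particular, it is nonempty). -/
def IsInterval (r : ℕ) (B : Set (Fin r)) : Prop :=
  ∃ a b : ℕ, a ≤ b ∧ b < r ∧ B = {j : Fin r | a ≤ (j : ℕ) ∧ (j : ℕ) ≤ b}

/-- A ring partition of the vertex set of the spider web graph `G_{N,r}` into `k` parts:
the parts are `ZMod N × B 1, ..., ZMod N × B k` where the `B i` are pairwise disjoint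
nonempty intervals of `Fin r` whose union is all of `Fin r`. -/
def IsRingPartition (N r k : ℕ) (S : Fin k → Set (ZMod N × Fin r)) : Prop :=
  ∃ B : Fin k → Set (Fin r),
    (∀ i, IsInterval r (B i)) ∧
    Pairwise (Function.onFun Disjoint B) ∧
    (⋃ i, B i) = Set.univ ∧
    ∀ i, S i = (Set.univ : Set (ZMod N)) ×ˢ B i

/-- The wedge Cheeger constant `φ_{N,r}(k)`: the minimum over all wedge partitions
`S 1, ..., S k` of `G_{N,r}` of `max_i Cut(S i)/Volume(S i)`. -/
noncomputable def wedgeCheeger (N r k : ℕ) : ℝ :=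
  sInf {x : ℝ | ∃ S : Fin k → Set (ZMod N × Fin r), IsWedgePartition N r k S ∧
    x = ⨆ i, (cut (spiderWeb N r) (S i) : ℝ) / (volume (spiderWeb N r) (S i) : ℝ)}

/-- The ring Cheeger constant `ψ_{N,r}(k)`: the minimum over all ring partitions
`S 1, ..., S k` of `G_{N,r}` of `max_i Cut(S i)/Volume(S i)`. -/
noncomputable def ringCheeger (N r k : ℕ) : ℝ :=
  sInf {x : ℝ | ∃ S : Fin k → Set (ZMod N × Fin r), IsRingPartition N r k S ∧
    x = ⨆ i, (cut (spiderWeb N r) (S i) : ℝ) / (volume (spiderWeb N r) (S i) : ℝ)}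

/-!
Cut the rings `0, …, r - 1` into `k` consecutive blocks of `⌊r/k⌋` rings each, the last block
absorbing the remainder. A block of rings is left only through its innermost and outermost ring,
so its cut is at most `2N`, while every vertex of `G_{N,r}` has degree at least `3`, so its volume
is at least `3N⌊r/k⌋`. Hence every ratio is at most `2/(3⌊r/k⌋) ≤ 2(k-1)/(r-1)`, and with
`c = (k-1)/(r-1) ∈ [0,1]`, Jordan's inequality `c ≤ sin(πc/2)` gives
`2c ≤ 2 sin(πc/2) = √(2(1 - cos πc))`.
-/

open SimpleGraph Set

theorem cut_boxProd_univ_prod {α β : Type*} (G : SimpleGraph α) (H : SimpleGraph β)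
    (B : Set β) :
    cut (G □ H) (univ ×ˢ B) = Nat.card α * cut H B := by
  -- an edge leaving `univ ×ˢ B` cannot be horizontal, so it is a copy of an edge of `H`
  have hleave : {p : (α × β) × (α × β) |
      p.1 ∈ univ ×ˢ B ∧ p.2 ∉ univ ×ˢ B ∧ (G □ H).Adj p.1 p.2} =
        (fun q : α × β × β => ((q.1, q.2.1), (q.1, q.2.2))) ''
        (univ ×ˢ {p | p.1 ∈ B ∧ p.2 ∉ B ∧ H.Adj p.1 p.2}) := by
    ext ⟨⟨x, j⟩, ⟨x', j'⟩⟩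
    simp only [boxProd_adj, mem_ofPred_eq, mem_prod, mem_univ, true_and, mem_image]
    aesop
  rw [cut, cut, hleave,
    ncard_image_of_injective _ (by rintro ⟨_, _, _⟩ ⟨_, _, _⟩ h; simp_all), ncard_prod,
    ncard_univ]

theorem cut_pathGraph_le_two {r : ℕ} {B : Set (Fin r)} (hB : IsInterval r B) :
    cut (pathGraph r) B ≤ 2 := by
  obtain ⟨a, b, -, -, rfl⟩ := hB
  -- `[a, b]` is left only upwards from `b` or downwards from `a`
  calc cut (pathGraph r) _ ≤ (univ : Set Bool).ncard := by
        refine ncard_le_ncard_of_injOn (fun p : Fin r × Fin r => decide (p.1 < p.2))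
          (fun _ _ => mem_univ _) ?_ finite_univ
        rintro ⟨u, v⟩ ⟨hu, hv, huv⟩ ⟨u', v'⟩ ⟨hu', hv', huv'⟩ h
        simp only [mem_ofPred_eq, not_and_or, not_le, pathGraph_adj, decide_eq_decide,
          Fin.lt_def] at *
        ext <;> simp only <;> omega
    _ = 2 := by simp

theorem volume_eq_sum_degree {V : Type*} [Fintype V] (G : SimpleGraph V) [DecidableRel G.Adj]
    (S : Finset V) : volume G S = ∑ v ∈ S, G.degree v := by
  classical
  rw [volume, ncard_eq_toFinset_card', toFinset_ofPred, Finset.card_filter, Fintype.sum_prod_type,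
    ← Finset.sum_filter_add_sum_filter_not Finset.univ (· ∈ S), Finset.filter_univ_mem]
  simp +contextual [← card_neighborFinset_eq_degree, neighborFinset_eq_filter]

theorem mul_ncard_le_volume {V : Type*} [Fintype V] {G : SimpleGraph V} [DecidableRel G.Adj]
    {S : Set V} {d : ℕ} (h : ∀ v ∈ S, d ≤ G.degree v) : d * S.ncard ≤ volume G S := by
  classical
  have := volume_eq_sum_degree G S.toFinset
  rw [coe_toFinset] at this
  rw [this, ncard_eq_toFinset_card', mul_comm, ← smul_eq_mul, ← Finset.sum_const]
  exact Finset.sum_le_sum fun v hv => h v (mem_toFinset.1 hv)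

theorem two_le_degree_circulantGraph_one {N : ℕ} (hN : 3 ≤ N) (x : ZMod N)
    [Fintype ((circulantGraph {(1 : ZMod N)}).neighborSet x)] :
    2 ≤ (circulantGraph {(1 : ZMod N)}).degree x := by
  have h1 : (1 : ZMod N) ≠ 0 := by
    simpa using (ZMod.natCast_eq_zero_iff 1 N).not.2 (Nat.not_dvd_of_pos_of_lt one_pos (by omega))
  have h2 : (2 : ZMod N) ≠ 0 := by
    simpa using (ZMod.natCast_eq_zero_iff 2 N).not.2 (Nat.not_dvd_of_pos_of_lt two_pos (by omega))
  have hpair : x - 1 ≠ x + 1 := fun h => h2 (by linear_combination -h)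
  rw [← Finset.card_pair hpair, ← card_neighborFinset_eq_degree]
  refine Finset.card_le_card fun y hy => ?_
  rw [mem_neighborFinset, circulantGraph_adj]
  rcases Finset.mem_insert.1 hy with rfl | hy
  · exact ⟨fun h => h1 (by linear_combination h), Or.inl (by simp)⟩
  · rw [Finset.mem_singleton.1 hy]
    exact ⟨fun h => h1 (by linear_combination -h), Or.inr (by simp)⟩

theorem three_le_degree_spiderWeb {N r : ℕ} (hN : 3 ≤ N) (hr : 2 ≤ r) (v : ZMod N × Fin r)
    [Fintype ((spiderWeb N r).neighborSet v)] : 3 ≤ (spiderWeb N r).degree v := by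
  classical
  have : NeZero N := ⟨by omega⟩
  have : Nontrivial (Fin r) := Fin.nontrivial_iff_two_le.2 hr
  have hpath := (pathGraph_preconnected r).degree_pos_of_nontrivial v.2
  have hcycle := two_le_degree_circulantGraph_one hN v.1
  unfold spiderWeb at *
  rw [degree_boxProd]
  omega

theorem ncard_setOf_le_and_le {r a b : ℕ} (hb : b < r) :
    {j : Fin r | a ≤ (j : ℕ) ∧ (j : ℕ) ≤ b}.ncard = b + 1 - a := by
  rw [← ncard_image_of_injective _ Fin.val_injective]
  have : Fin.val '' {j : Fin r | a ≤ (j : ℕ) ∧ (j : ℕ) ≤ b} = Icc a b := by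
    ext n
    refine ⟨?_, fun hn => ⟨⟨n, by grind⟩, hn, rfl⟩⟩
    rintro ⟨j, hj, rfl⟩
    exact hj
  rw [this, ← Finset.coe_Icc, ncard_coe_finset, Nat.card_Icc]

theorem min_div_eq_iff {m k r i j : ℕ} (hm : 0 < m) (hj : j < r) (hi : i < k) :
    min (j / m) (k - 1) = i ↔
      i * m ≤ j ∧ j ≤ if i + 1 = k then r - 1 else i * m + m - 1 := by
  have h1 : i ≤ j / m ↔ i * m ≤ j := Nat.le_div_iff_mul_le hm
  have h2 : j / m < i + 1 ↔ j < i * m + m := by rw [Nat.div_lt_iff_lt_mul hm, add_mul, one_mul]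
  split_ifs <;> omega

theorem exists_interval_partition {r k m : ℕ} (hm : 0 < m) (hkm : k * m ≤ r) (hk : 0 < k) :
    ∃ B : Fin k → Set (Fin r), (∀ i, IsInterval r (B i)) ∧
      Pairwise (Function.onFun Disjoint B) ∧ (⋃ i, B i) = univ ∧
      ∀ i, m ≤ (B i).ncard := by
  -- `j` goes to block `min (j / m) (k - 1)`, whose last element is `e i`
  set e : ℕ → ℕ := fun i => if i + 1 = k then r - 1 else i * m + m - 1
  have he : ∀ i : Fin k, (i : ℕ) * m + m ≤ e i + 1 ∧ e i < r := fun i => by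
    have : (i + 1) * m ≤ k * m := Nat.mul_le_mul_right m i.isLt
    rw [add_mul, one_mul] at this
    simp only [e]
    split_ifs <;> omega
  have hB : ∀ i : Fin k, {j : Fin r | min ((j : ℕ) / m) (k - 1) = i} =
      {j : Fin r | (i : ℕ) * m ≤ j ∧ (j : ℕ) ≤ e i} := fun i => by
    ext j
    exact min_div_eq_iff hm j.isLt i.isLt
  refine ⟨fun i => {j | min ((j : ℕ) / m) (k - 1) = i}, fun i => ?_, fun i i' hii' => ?_, ?_,
    fun i => ?_⟩
  · exact ⟨_, _, by have := he i; omega, (he i).2, hB i⟩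
  · exact disjoint_left.2 fun j hj hj' => hii' (Fin.ext (hj.symm.trans hj'))
  · exact eq_univ_of_forall fun j => mem_iUnion.2 ⟨⟨min (j / m) (k - 1), by omega⟩, rfl⟩
  · dsimp only
    rw [hB, ncard_setOf_le_and_le (he i).2]
    have := he i
    omega

theorem cut_div_volume_spiderWeb_le {N r m : ℕ} (hN : 3 ≤ N) (hr : 2 ≤ r) {B : Set (Fin r)}
    (hB : IsInterval r B) (hm : 0 < m) (hmB : m ≤ B.ncard) :
    (cut (spiderWeb N r) (univ ×ˢ B) : ℝ) / volume (spiderWeb N r) (univ ×ˢ B)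
      ≤ 2 / (3 * m) := by
  classical
  have : NeZero N := ⟨by omega⟩
  have hcut : cut (spiderWeb N r) (univ ×ˢ B) ≤ N * 2 := by
    rw [spiderWeb, cut_boxProd_univ_prod, Nat.card_zmod]
    exact Nat.mul_le_mul_left N (cut_pathGraph_le_two hB)
  have hvol : 3 * (N * m) ≤ volume (spiderWeb N r) (univ ×ˢ B) :=
    calc 3 * (N * m) ≤ 3 * (univ ×ˢ B).ncard := by
          rw [ncard_prod, ncard_univ, Nat.card_zmod]
          gcongr
      _ ≤ _ := mul_ncard_le_volume fun v _ => three_le_degree_spiderWeb hN hr v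
  calc (cut (spiderWeb N r) (univ ×ˢ B) : ℝ) / volume (spiderWeb N r) (univ ×ˢ B)
      ≤ (N * 2 : ℝ) / (3 * (N * m)) :=
        div_le_div₀ (by positivity) (by exact_mod_cast hcut) (by positivity)
          (by exact_mod_cast hvol)
    _ = 2 / (3 * m) := by field_simp

theorem exists_ringPartition_cut_div_volume_le {N r k : ℕ} (hN : 3 ≤ N) (hk : 2 ≤ k)
    (hkr : k ≤ r) :
    ∃ S : Fin k → Set (ZMod N × Fin r), IsRingPartition N r k S ∧
      ∀ i, (cut (spiderWeb N r) (S i) : ℝ) / volume (spiderWeb N r) (S i)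
        ≤ 2 / (3 * (r / k : ℕ)) := by
  have hm : 0 < r / k := Nat.div_pos hkr (by omega)
  obtain ⟨B, hB, hdisj, hcover, hcard⟩ :=
    exists_interval_partition hm (Nat.mul_div_le r k) (by omega)
  exact ⟨fun i => univ ×ˢ B i, ⟨B, hB, hdisj, hcover, fun _ => rfl⟩,
    fun i => cut_div_volume_spiderWeb_le hN (by omega) (hB i) hm (hcard i)⟩

theorem two_div_three_mul_div_le {k r : ℕ} (hk : 2 ≤ k) (hkr : k ≤ r) :
    (2 : ℝ) / (3 * (r / k : ℕ)) ≤ 2 * (((k : ℝ) - 1) / ((r : ℝ) - 1)) := by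
  set q := r / k
  have hq : 1 ≤ q := (Nat.one_le_div_iff (by omega)).2 hkr
  have hr : r < k * (q + 1) := Nat.lt_mul_div_succ r (by omega)
  have hnat : r + 3 * q ≤ 3 * k * q + 1 := by nlinarith
  have hreal : (r : ℝ) + 3 * q ≤ 3 * k * q + 1 := by exact_mod_cast hnat
  have hr1 : (1 : ℝ) < r := by exact_mod_cast (by omega : 1 < r)
  have hq0 : (0 : ℝ) < q := by exact_mod_cast hq
  rw [← mul_div_assoc, div_le_div_iff₀ (by positivity) (by linarith)]
  nlinarith

theorem two_mul_le_sqrt_two_mul_one_sub_cos_pi_mul {c : ℝ} (h0 : 0 ≤ c) (h1 : c ≤ 1) :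
    2 * c ≤ √(2 * (1 - Real.cos (Real.pi * c))) := by
  have hsin : c ≤ Real.sin (Real.pi * c / 2) := by
    have := Real.mul_le_sin (x := Real.pi * c / 2) (by positivity) (by nlinarith [Real.pi_pos])
    calc c = 2 / Real.pi * (Real.pi * c / 2) := by field_simp
      _ ≤ _ := this
  have hcos : 2 * (1 - Real.cos (Real.pi * c)) = 4 * Real.sin (Real.pi * c / 2) ^ 2 := by
    have := Real.sin_sq_eq_half_sub (Real.pi * c / 2)
    rw [show 2 * (Real.pi * c / 2) = Real.pi * c by ring] at this
    linarith
  rw [Real.le_sqrt (by positivity) (by rw [hcos]; positivity), hcos]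
  nlinarith

theorem two_div_three_mul_div_le_sqrt {k r : ℕ} (hk : 2 ≤ k) (hkr : k ≤ r) :
    (2 : ℝ) / (3 * (r / k : ℕ))
      ≤ √(2 * (1 - Real.cos (Real.pi * ((k : ℝ) - 1) / ((r : ℝ) - 1)))) := by
  have hk1 : (1 : ℝ) ≤ k := by exact_mod_cast (by omega : 1 ≤ k)
  have hkr' : (k : ℝ) ≤ r := by exact_mod_cast hkr
  rw [mul_div_assoc]
  exact (two_div_three_mul_div_le hk hkr).trans <| two_mul_le_sqrt_two_mul_one_sub_cos_pi_mul
    (div_nonneg (by linarith) (by linarith)) (div_le_one_of_le₀ (by linarith) (by linarith))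

theorem ringCheeger_le_of_isRingPartition {N r k : ℕ} [Nonempty (Fin k)]
    {S : Fin k → Set (ZMod N × Fin r)} (hS : IsRingPartition N r k S) {x : ℝ}
    (h : ∀ i, (cut (spiderWeb N r) (S i) : ℝ) / volume (spiderWeb N r) (S i) ≤ x) :
    ringCheeger N r k ≤ x := by
  refine le_trans (csInf_le ?_ ?_) (ciSup_le h)
  · refine ⟨0, ?_⟩
    rintro _ ⟨T, -, rfl⟩
    exact Real.iSup_nonneg fun i => by positivity
  · exact ⟨S, hS, rfl⟩

/-- **Proposition 1, ring part.** For `N ≥ 3` and `2 ≤ k ≤ r`, the ring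
Cheeger constant of the spider web graph `G_{N,r}` satisfies
`ψ_{N,r}(k) ≤ √(2(1 − cos(π(k−1)/(r−1))))`; that is, there exists a ring partition
`S 1, ..., S k` with `max_i Cut(S i)/Volume(S i) ≤ √(2λ^P_k)`, where
`λ^P_k = 1 − cos(π(k−1)/(r−1))` is the `k`-th eigenvalue of the normalized Laplacian of the
path graph on `r` vertices. -/
theorem ringCheeger_le_sqrt_path_eigenvalue (N r k : ℕ)
    (hN : 3 ≤ N) (hk : 2 ≤ k) (hkr : k ≤ r) :
    ringCheeger N r k
      ≤ Real.sqrt (2 * (1 - Real.cos (Real.pi * ((k : ℝ) - 1) / ((r : ℝ) - 1)))) ∧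
    (∃ S : Fin k → Set (ZMod N × Fin r), IsRingPartition N r k S ∧
      ∀ i, (cut (spiderWeb N r) (S i) : ℝ) / (volume (spiderWeb N r) (S i) : ℝ)
        ≤ Real.sqrt (2 * (1 - Real.cos (Real.pi * ((k : ℝ) - 1) / ((r : ℝ) - 1))))) := by
  obtain ⟨S, hS, hratio⟩ := exists_ringPartition_cut_div_volume_le hN hk hkr
  have hbound := fun i => (hratio i).trans (two_div_three_mul_div_le_sqrt hk hkr)
  have : Nonempty (Fin k) := ⟨⟨0, by omega⟩⟩
  exact ⟨ringCheeger_le_of_isRingPartition hS hbound, S, hS, hbound⟩
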